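/- arXiv:2509.11077 — 4 statements merged into one kernel-verified Lean document; each statement's English description precedes it below -/
import Mathlib

section
/- Let u_1, …, u_n ∈ ℤ^k and H_i(x) := ⟨u_i, x⟩. Let x ∈ ℝ^k and let y lie in the topological closure of the stratum of x (the stratum of x being the set of z with ⌈H_i(z)⌉ = ⌈H_i(x)⌉ and H_i(z) ∈ ℤ iff H_i(x) ∈ ℤ, for all i). Then for every i, the difference ⌈H_i(x)⌉ − ⌈H_i(y)⌉ is either 0 or 1. -/
theorem Int.sub_ceil_eq_zero_or_one_of_mem_Icc {r : ℝ} {c : ℤ} (hr : r ∈ Set.Icc ((c : ℝ) - 1) c) :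
    c - ⌈r⌉ = 0 ∨ c - ⌈r⌉ = 1 := by
  have hle : ⌈r⌉ ≤ c := Int.ceil_le.mpr hr.2
  have hge : c - 1 ≤ ⌈r⌉ := by
    have : ((c - 1 : ℤ) : ℝ) ≤ ⌈r⌉ := by push_cast; linarith [hr.1, Int.le_ceil r]
    exact_mod_cast this
  omega

/-- `s` lies in `f ⁻¹' (c - 1, c]`, so by continuity its closure lies in `f ⁻¹' [c - 1, c]`. -/
theorem sub_ceil_eq_zero_or_one_of_mem_closure {X : Type*} [TopologicalSpace X] {f : X → ℝ}
    (hf : Continuous f) {s : Set X} {c : ℤ} (hs : ∀ z ∈ s, ⌈f z⌉ = c) {y : X}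
    (hy : y ∈ closure s) : c - ⌈f y⌉ = 0 ∨ c - ⌈f y⌉ = 1 := by
  have hmaps : Set.MapsTo f s (Set.Ioc ((c : ℝ) - 1) c) := fun z hz =>
    Int.ceil_eq_iff.mp (hs z hz)
  have hfy := map_mem_closure hf hy hmaps
  rw [closure_Ioc (by linarith)] at hfy
  exact Int.sub_ceil_eq_zero_or_one_of_mem_Icc hfy

/-- If `y` lies in the topological closure of the stratum of `x`, then for every `i` the
difference `⌈H_i(x)⌉ − ⌈H_i(y)⌉` is either `0` or `1`. -/
theorem ceiling_difference_closure (n k : ℕ) (u : Fin n → Fin k → ℤ) (x y : Fin k → ℝ)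
    (hy : y ∈ closure {z : Fin k → ℝ | ∀ i,
      ⌈∑ j, (u i j : ℝ) * z j⌉ = ⌈∑ j, (u i j : ℝ) * x j⌉ ∧
      ((∃ m : ℤ, (∑ j, (u i j : ℝ) * z j) = (m : ℝ)) ↔
        (∃ m : ℤ, (∑ j, (u i j : ℝ) * x j) = (m : ℝ)))}) :
    ∀ i, ⌈∑ j, (u i j : ℝ) * x j⌉ - ⌈∑ j, (u i j : ℝ) * y j⌉ = 0 ∨
      ⌈∑ j, (u i j : ℝ) * x j⌉ - ⌈∑ j, (u i j : ℝ) * y j⌉ = 1 := by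
  intro i
  have hcont : Continuous fun z : Fin k → ℝ => ∑ j, (u i j : ℝ) * z j := by fun_prop
  exact sub_ceil_eq_zero_or_one_of_mem_closure hcont (fun z hz => (hz i).1) hy
end

section
/- Let R = ℂ[x, y] and let φ : R^4 → R^4 be the R-linear map given by the matrix [[−1, 0, 0, x], [x, −y, 0, 0], [0, 1, −1, 0], [0, 0, x, −y]] acting on column vectors. Then the cokernel of φ is isomorphic, as an R-module, to the polynomial ring ℂ[t] where x acts as multiplication by t^2 and y acts as multiplication by t^3, i.e., to the normalization of the coordinate ring ℂ[x,y]/(x^3 − y^2) of the cuspidal cubic curve. -/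
/-!
Give `e₀, …, e₃` the weights `2, 0, 3, 1` and `x, y` the weights `2, 3`; the matrix is
homogeneous, and `eᵢ ↦ t^(weight i)` kills its columns, so it induces a map from the cokernel
onto `ℂ[t]`. Conversely, the columns say `e₀ = x e₁`, `e₂ = y e₁ = x e₃` and `x e₀ = y e₃` in the
cokernel, so the classes `x^k e₁` and `x^k e₃`, standing for `t^(2k)` and `t^(2k+1)`, are shifted
by `2` under `x` and by `3` under `y`, exactly as the monomials `tⁿ` are. Hence sending `tⁿ` to
the corresponding class is `ℂ[x,y]`-linear, and it inverts the first map.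
-/

open MvPolynomial

/-- The `ℂ[x,y]`-module structure on `ℂ[t]` in which `x` acts as multiplication by `t²`
and `y` acts as multiplication by `t³` (i.e. `ℂ[t]` is the normalization of the coordinate
ring `ℂ[x,y]/(x³ − y²)` of the cuspidal cubic). -/
noncomputable instance cuspModule : Module (MvPolynomial (Fin 2) ℂ) (Polynomial ℂ) :=
  Module.compHom (Polynomial ℂ)
    ((MvPolynomial.aeval ![Polynomial.X ^ 2, Polynomial.X ^ 3]).toRingHom :
      MvPolynomial (Fin 2) ℂ →+* Polynomial ℂ)

theorem Matrix.sum_smul_mk_single_eq_zero {R m n : Type*} [CommRing R] [Fintype m] [Fintype n]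
    [DecidableEq m] [DecidableEq n] (M : Matrix m n R) (j : n) :
    ∑ i, M i j • Submodule.Quotient.mk (p := LinearMap.range M.mulVecLin) (Pi.single i 1) =
      0 := by
  have hcol : ∑ i, M i j • Pi.single i (1 : R) = M.mulVecLin (Pi.single j 1) := by
    ext k; simp [Finset.sum_apply, Pi.single_apply]
  calc ∑ i, M i j • Submodule.Quotient.mk (Pi.single i 1)
      = (LinearMap.range M.mulVecLin).mkQ (∑ i, M i j • Pi.single i 1) := by
        simp only [map_sum, map_smul, Submodule.mkQ_apply]
    _ = 0 := by
        rw [hcol, Submodule.mkQ_apply, Submodule.Quotient.mk_eq_zero]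
        exact LinearMap.mem_range_self _ _

theorem MvPolynomial.map_smul_of_map_X_smul {σ K M N : Type*} [CommSemiring K]
    [AddCommMonoid M] [Module K M] [Module (MvPolynomial σ K) M]
    [IsScalarTower K (MvPolynomial σ K) M]
    [AddCommMonoid N] [Module K N] [Module (MvPolynomial σ K) N]
    [IsScalarTower K (MvPolynomial σ K) N] (f : M →ₗ[K] N)
    (hf : ∀ i m, f ((X i : MvPolynomial σ K) • m) = (X i : MvPolynomial σ K) • f m)
    (r : MvPolynomial σ K) (m : M) :
    f (r • m) = r • f m := by
  induction r using MvPolynomial.induction_on generalizing m with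
  | C a => rw [← algebraMap_eq, algebraMap_smul, algebraMap_smul, map_smul]
  | add p q hp hq => rw [add_smul, map_add, hp, hq, add_smul]
  | mul_X p i hp => rw [mul_smul, hp, hf, mul_smul]

noncomputable section

namespace CuspCokernel

local notation "R" => MvPolynomial (Fin 2) ℂ

theorem smul_poly_def (r : R) (p : Polynomial ℂ) :
    r • p = aeval ![Polynomial.X ^ 2, Polynomial.X ^ 3] r * p := rfl

instance : IsScalarTower ℂ R (Polynomial ℂ) where
  smul_assoc c r p := by rw [smul_poly_def, smul_poly_def, map_smul, smul_mul_assoc]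

def varWeight : Fin 2 → ℕ := ![2, 3]

theorem X_smul_poly (i : Fin 2) (p : Polynomial ℂ) :
    (X i : R) • p = Polynomial.X ^ varWeight i * p := by
  fin_cases i <;> simp [smul_poly_def, varWeight]

abbrev cuspMatrix : Matrix (Fin 4) (Fin 4) R :=
  !![-1, 0, 0, X 0; X 0, -X 1, 0, 0; 0, 1, -1, 0; 0, 0, X 0, -X 1]

abbrev Coker := (Fin 4 → R) ⧸ LinearMap.range cuspMatrix.mulVecLin

def basisClass (i : Fin 4) : Coker := Submodule.Quotient.mk (Pi.single i 1)

theorem sum_smul_basisClass_eq_zero (j : Fin 4) : ∑ i, cuspMatrix i j • basisClass i = 0 :=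
  cuspMatrix.sum_smul_mk_single_eq_zero j

theorem basisClass_zero_eq_X_zero_smul : basisClass 0 = (X 0 : R) • basisClass 1 := by
  simpa [Fin.sum_univ_four, neg_add_eq_zero] using sum_smul_basisClass_eq_zero 0

theorem basisClass_two_eq_X_one_smul : basisClass 2 = (X 1 : R) • basisClass 1 := by
  simpa [Fin.sum_univ_four, neg_add_eq_zero, eq_comm] using sum_smul_basisClass_eq_zero 1

theorem basisClass_two_eq_X_zero_smul : basisClass 2 = (X 0 : R) • basisClass 3 := by
  simpa [Fin.sum_univ_four, neg_add_eq_zero] using sum_smul_basisClass_eq_zero 2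

theorem X_zero_smul_basisClass_zero :
    (X 0 : R) • basisClass 0 = (X 1 : R) • basisClass 3 := by
  simpa [Fin.sum_univ_four, add_neg_eq_zero] using sum_smul_basisClass_eq_zero 3

def powClass (n : ℕ) : Coker := (X 0 : R) ^ (n / 2) • basisClass (if Even n then 1 else 3)

theorem powClass_two_mul (k : ℕ) : powClass (2 * k) = (X 0 : R) ^ k • basisClass 1 := by
  simp [powClass]

theorem powClass_two_mul_add_one (k : ℕ) :
    powClass (2 * k + 1) = (X 0 : R) ^ k • basisClass 3 := by
  simp [powClass, show (2 * k + 1) / 2 = k by omega]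

theorem X_zero_smul_powClass (n : ℕ) : (X 0 : R) • powClass n = powClass (n + 2) := by
  obtain ⟨k, rfl | rfl⟩ := Nat.even_or_odd' n
  · rw [show 2 * k + 2 = 2 * (k + 1) by ring, powClass_two_mul, powClass_two_mul, smul_smul,
      pow_succ']
  · rw [show 2 * k + 1 + 2 = 2 * (k + 1) + 1 by ring, powClass_two_mul_add_one,
      powClass_two_mul_add_one, smul_smul, pow_succ']

theorem X_one_smul_powClass (n : ℕ) : (X 1 : R) • powClass n = powClass (n + 3) := by
  obtain ⟨k, rfl | rfl⟩ := Nat.even_or_odd' n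
  · rw [show 2 * k + 3 = 2 * (k + 1) + 1 by ring, powClass_two_mul, powClass_two_mul_add_one,
      smul_comm, ← basisClass_two_eq_X_one_smul, basisClass_two_eq_X_zero_smul, smul_smul,
      pow_succ]
  · rw [show 2 * k + 1 + 3 = 2 * (k + 2) by ring, powClass_two_mul, powClass_two_mul_add_one,
      smul_comm, ← X_zero_smul_basisClass_zero, basisClass_zero_eq_X_zero_smul, smul_smul,
      smul_smul, pow_add, sq, mul_assoc]

theorem X_smul_powClass (i : Fin 2) (n : ℕ) :
    (X i : R) • powClass n = powClass (n + varWeight i) := by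
  fin_cases i
  exacts [X_zero_smul_powClass n, X_one_smul_powClass n]

def ofPolyₗ : Polynomial ℂ →ₗ[ℂ] Coker :=
  Polynomial.lsum fun n => LinearMap.toSpanSingleton ℂ Coker (powClass n)

theorem ofPolyₗ_monomial (n : ℕ) (c : ℂ) :
    ofPolyₗ (Polynomial.monomial n c) = c • powClass n := by
  simp [ofPolyₗ, Polynomial.sum_monomial_index]

theorem ofPolyₗ_X_smul (i : Fin 2) (p : Polynomial ℂ) :
    ofPolyₗ ((X i : R) • p) = (X i : R) • ofPolyₗ p := by
  induction p using Polynomial.induction_on' with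
  | add p q hp hq => rw [smul_add, map_add, map_add, hp, hq, smul_add]
  | monomial n c =>
    rw [X_smul_poly, Polynomial.X_pow_mul_monomial, ofPolyₗ_monomial, ofPolyₗ_monomial,
      smul_comm, X_smul_powClass]

def ofPoly : Polynomial ℂ →ₗ[R] Coker where
  __ := ofPolyₗ
  map_smul' := MvPolynomial.map_smul_of_map_X_smul ofPolyₗ ofPolyₗ_X_smul

theorem ofPoly_X_pow (n : ℕ) : ofPoly (Polynomial.X ^ n) = powClass n := by
  rw [← Polynomial.monomial_one_right_eq_X_pow]
  exact (ofPolyₗ_monomial n 1).trans (one_smul ℂ _)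

def basisWeight : Fin 4 → ℕ := ![2, 0, 3, 1]

theorem powClass_basisWeight (i : Fin 4) : powClass (basisWeight i) = basisClass i := by
  fin_cases i
  · simpa [basisWeight, basisClass_zero_eq_X_zero_smul] using powClass_two_mul 1
  · simpa [basisWeight] using powClass_two_mul 0
  · simpa [basisWeight, basisClass_two_eq_X_zero_smul] using powClass_two_mul_add_one 1
  · simpa [basisWeight] using powClass_two_mul_add_one 0

def toPoly : (Fin 4 → R) →ₗ[R] Polynomial ℂ :=
  Fintype.linearCombination R fun i => Polynomial.X ^ basisWeight i

theorem toPoly_comp_mulVecLin : toPoly ∘ₗ cuspMatrix.mulVecLin = 0 := by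
  ext j : 2
  fin_cases j <;>
    simp [toPoly, Fintype.linearCombination_apply, Fin.sum_univ_four, basisWeight, X_smul_poly,
      varWeight, ← pow_add, ← pow_succ]

def fromCoker : Coker →ₗ[R] Polynomial ℂ :=
  Submodule.liftQ _ toPoly (LinearMap.range_le_ker_iff.2 toPoly_comp_mulVecLin)

theorem fromCoker_basisClass (i : Fin 4) :
    fromCoker (basisClass i) = Polynomial.X ^ basisWeight i := by
  simp [fromCoker, toPoly, basisClass]

theorem fromCoker_powClass (n : ℕ) : fromCoker (powClass n) = Polynomial.X ^ n := by
  obtain ⟨k, rfl | rfl⟩ := Nat.even_or_odd' n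
  · simp [powClass_two_mul, fromCoker_basisClass, basisWeight, smul_poly_def, pow_mul]
  · simp [powClass_two_mul_add_one, fromCoker_basisClass, basisWeight, smul_poly_def, pow_succ,
      pow_mul]

theorem fromCoker_ofPoly (p : Polynomial ℂ) : fromCoker (ofPoly p) = p := by
  induction p using Polynomial.induction_on' with
  | add p q hp hq => rw [map_add, map_add, hp, hq]
  | monomial n c =>
    rw [← Polynomial.smul_X_eq_monomial, LinearMap.map_smul_of_tower,
      LinearMap.map_smul_of_tower, ofPoly_X_pow, fromCoker_powClass]

theorem ofPoly_comp_fromCoker : ofPoly ∘ₗ fromCoker = LinearMap.id := by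
  refine Submodule.linearMap_qext _ (LinearMap.pi_ext' fun i => LinearMap.ext_ring ?_)
  change ofPoly (fromCoker (basisClass i)) = basisClass i
  rw [fromCoker_basisClass, ofPoly_X_pow, powClass_basisWeight]

end CuspCokernel

end

/-- The cokernel of the differential of the affine HHL complex for the cuspidal cubic
example is isomorphic, as an `R = ℂ[x,y]`-module, to `ℂ[t]` where `x` acts by `t²` and
`y` acts by `t³`. -/
theorem HHL_cusp_cokernel :
    Nonempty
      (((Fin 4 → MvPolynomial (Fin 2) ℂ) ⧸
          LinearMap.range
            (Matrix.mulVecLin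
              (!![-1, 0, 0, X 0;
                  X 0, -X 1, 0, 0;
                  0, 1, -1, 0;
                  0, 0, X 0, -X 1] : Matrix (Fin 4) (Fin 4) (MvPolynomial (Fin 2) ℂ))))
        ≃ₗ[MvPolynomial (Fin 2) ℂ] Polynomial ℂ) :=
  ⟨LinearEquiv.ofLinearMap CuspCokernel.fromCoker CuspCokernel.ofPoly
    (LinearMap.ext CuspCokernel.fromCoker_ofPoly) CuspCokernel.ofPoly_comp_fromCoker⟩
end

section
/- Let R = ℂ[x, y]. Let d_2 : R^3 → R^6 be given by the 6×3 matrix [[−x, 0, 1], [y, −1, 0], [0, 1, −x], [−1, 0, y], [1, −x, 0], [0, y, −1]] and d_1 : R^6 → R^3 by the 3×6 matrix [[0, 1, 1, 0, −y, −x], [−y, −x, 0, 1, 1, 0], [1, 0, −y, −x, 0, 1]], both acting on column vectors. Then d_1 ∘ d_2 = 0 and the resulting complex is exact at the middle term, i.e., the kernel of d_1 equals the image of d_2. -/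
open MvPolynomial

private lemma HHL_prime_f : Prime (X 1 - X 0 ^ 2 : MvPolynomial (Fin 2) ℂ) := by
  have h : Prime (((renameEquiv ℂ (Equiv.swap (0 : Fin 2) 1)).trans (finSuccEquiv ℂ 1))
      (X 1 - X 0 ^ 2)) := by
    have e : ((renameEquiv ℂ (Equiv.swap (0 : Fin 2) 1)).trans (finSuccEquiv ℂ 1))
        (X 1 - X 0 ^ 2) = Polynomial.X - Polynomial.C (X 0 ^ 2) := by
      have hX1 : (X 1 : MvPolynomial (Fin 2) ℂ) = X (Fin.succ 0) := rfl
      rw [map_sub, map_pow, hX1]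
      simp [Equiv.swap_apply_left, Equiv.swap_apply_right,
        finSuccEquiv_X_zero, finSuccEquiv_X_succ]
      rw [hX1, finSuccEquiv_X_succ, ← map_pow]
    rw [e]
    exact Polynomial.prime_X_sub_C _
  exact (MulEquiv.prime_iff ((renameEquiv ℂ (Equiv.swap (0 : Fin 2) 1)).trans
    (finSuccEquiv ℂ 1)).toMulEquiv).mp h

private lemma HHL_not_dvd :
    ¬ (X 1 - X 0 ^ 2 : MvPolynomial (Fin 2) ℂ) ∣ (1 - X 0 * X 1) := by
  rintro ⟨h, hh⟩
  have := congrArg (eval ![(2 : ℂ), 4]) hh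
  simp at this
  norm_num at this

/-- For the affine HHL complex `0 → R³ → R⁶ → R³ → 0` of the torsion example
(`R = ℂ[x,y]`), the composite `d₁ ∘ d₂` is zero and the complex is exact at the middle
term: `ker d₁ = im d₂`. -/
theorem HHL_torsion_exact_middle :
    (LinearMap.comp
        (Matrix.mulVecLin
          (!![0, 1, 1, 0, -(X 1), -(X 0);
              -(X 1), -(X 0), 0, 1, 1, 0;
              1, 0, -(X 1), -(X 0), 0, 1] :
            Matrix (Fin 3) (Fin 6) (MvPolynomial (Fin 2) ℂ)))
        (Matrix.mulVecLin
          (!![-(X 0), 0, 1;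
              X 1, -1, 0;
              0, 1, -(X 0);
              -1, 0, X 1;
              1, -(X 0), 0;
              0, X 1, -1] :
            Matrix (Fin 6) (Fin 3) (MvPolynomial (Fin 2) ℂ))) = 0) ∧
    LinearMap.ker
        (Matrix.mulVecLin
          (!![0, 1, 1, 0, -(X 1), -(X 0);
              -(X 1), -(X 0), 0, 1, 1, 0;
              1, 0, -(X 1), -(X 0), 0, 1] :
            Matrix (Fin 3) (Fin 6) (MvPolynomial (Fin 2) ℂ))) =
      LinearMap.range
        (Matrix.mulVecLin
          (!![-(X 0), 0, 1;
              X 1, -1, 0;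
              0, 1, -(X 0);
              -1, 0, X 1;
              1, -(X 0), 0;
              0, X 1, -1] :
            Matrix (Fin 6) (Fin 3) (MvPolynomial (Fin 2) ℂ))) := by
  have hcomp : (LinearMap.comp
        (Matrix.mulVecLin
          (!![0, 1, 1, 0, -(X 1), -(X 0);
              -(X 1), -(X 0), 0, 1, 1, 0;
              1, 0, -(X 1), -(X 0), 0, 1] :
            Matrix (Fin 3) (Fin 6) (MvPolynomial (Fin 2) ℂ)))
        (Matrix.mulVecLin
          (!![-(X 0), 0, 1;
              X 1, -1, 0;
              0, 1, -(X 0);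
              -1, 0, X 1;
              1, -(X 0), 0;
              0, X 1, -1] :
            Matrix (Fin 6) (Fin 3) (MvPolynomial (Fin 2) ℂ))) = 0) := by
    rw [← Matrix.mulVecLin_mul]
    have hM : (!![0, 1, 1, 0, -(X 1), -(X 0);
              -(X 1), -(X 0), 0, 1, 1, 0;
              1, 0, -(X 1), -(X 0), 0, 1] :
            Matrix (Fin 3) (Fin 6) (MvPolynomial (Fin 2) ℂ)) *
        (!![-(X 0), 0, 1;
              X 1, -1, 0;
              0, 1, -(X 0);
              -1, 0, X 1;
              1, -(X 0), 0;
              0, X 1, -1] :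
            Matrix (Fin 6) (Fin 3) (MvPolynomial (Fin 2) ℂ)) = 0 := by
      ext i j
      fin_cases i <;> fin_cases j <;>
        simp [Matrix.mul_apply, Fin.sum_univ_succ] <;> ring
    rw [hM]
    simp
  refine ⟨hcomp, le_antisymm ?_ ?_⟩
  · -- ker ≤ range
    intro v hv
    rw [LinearMap.mem_ker] at hv
    have h0 := congrFun hv 0
    have h1 := congrFun hv 1
    have h2 := congrFun hv 2
    simp [Matrix.mulVecLin_apply, Matrix.mulVec, dotProduct,
      Fin.sum_univ_succ] at h0 h1 h2
    simp -failIfUnchanged only [show ((Fin.succ 0) : Fin 6) = 1 from rfl, show ((Fin.succ 1) : Fin 6) = 2 from rfl,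
      show ((Fin.succ 2) : Fin 6) = 3 from rfl, show (((Fin.succ 2).succ) : Fin 6) = 4 from rfl,
      show (((Fin.succ 2).succ.succ) : Fin 6) = 5 from rfl,
      show (((Fin.succ 1).succ) : Fin 6) = 3 from rfl] at h0 h1 h2
    -- key divisibility identity
    have key : (1 - X 0 * X 1) * (v 1 + v 2 + X 0 * v 0)
        = (X 1 - X 0 ^ 2) * (X 1 * v 0 - v 3) := by
      linear_combination h0 + X 1 * h1 + X 0 * h2
    have hdvd : (X 1 - X 0 ^ 2 : MvPolynomial (Fin 2) ℂ) ∣ (v 1 + v 2 + X 0 * v 0) := by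
      rcases HHL_prime_f.2.2 (1 - X 0 * X 1) (v 1 + v 2 + X 0 * v 0)
        ⟨X 1 * v 0 - v 3, key⟩ with h | h
      · exact absurd h HHL_not_dvd
      · exact h
    obtain ⟨a, ha⟩ := hdvd
    have hfa : (X 1 - X 0 ^ 2) * a = v 1 + v 2 + X 0 * v 0 := ha.symm
    have hga : (1 - X 0 * X 1) * a = X 1 * v 0 - v 3 := by
      have hf0 : (X 1 - X 0 ^ 2 : MvPolynomial (Fin 2) ℂ) ≠ 0 := HHL_prime_f.ne_zero
      apply mul_left_cancel₀ hf0
      linear_combination key - (1 - X 0 * X 1) * ha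
    rw [LinearMap.mem_range]
    refine ⟨![a, X 1 * a - v 1, v 0 + X 0 * a], ?_⟩
    funext i
    fin_cases i <;>
      simp [Matrix.mulVecLin_apply, Matrix.mulVec, dotProduct, Fin.sum_univ_succ,
        show (5 : Fin 6) = Fin.succ 4 from rfl, Matrix.cons_val_succ, Matrix.cons_val_four]
    · linear_combination hfa
    · linear_combination -hga
    · linear_combination hga - h1
    · simp -failIfUnchanged only [show (Fin.succ 4 : Fin 6) = (5 : Fin 6) from rfl]
      linear_combination X 1 * hfa - X 0 * hga - h2
  · -- range ≤ ker
    rintro _ ⟨w, rfl⟩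
    rw [LinearMap.mem_ker, ← LinearMap.comp_apply, hcomp]
    rfl
end

section
/- Let R = ℂ[x, y] and let d_1 : R^6 → R^3 be given by the 3×6 matrix [[0, 1, 1, 0, −y, −x], [−y, −x, 0, 1, 1, 0], [1, 0, −y, −x, 0, 1]] acting on column vectors. Then the cokernel of d_1 is isomorphic as an R-module to ℂ[x, y]/(y^3 − 1, x − y^2); in particular it is isomorphic as a ℂ-algebra to the group algebra ℂ[ℤ/3ℤ] and has dimension 3 as a ℂ-vector space. -/
open MvPolynomial

namespace HHLaux
noncomputable section

abbrev R := MvPolynomial (Fin 2) ℂ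
abbrev I : Ideal R := Ideal.span ({X 1 ^ 3 - 1, X 0 - X 1 ^ 2} : Set R)
abbrev D : Matrix (Fin 3) (Fin 6) R :=
  !![0, 1, 1, 0, -(X 1), -(X 0);
     -(X 1), -(X 0), 0, 1, 1, 0;
     1, 0, -(X 1), -(X 0), 0, 1]
abbrev N : Submodule R (Fin 3 → R) := LinearMap.range D.mulVecLin

lemma h1 : (X 1 ^ 3 - 1 : R) ∈ I := Ideal.subset_span (by simp)
lemma h2 : (X 0 - X 1 ^ 2 : R) ∈ I := Ideal.subset_span (by simp)

-- the map l : R^3 → R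
def l : (Fin 3 → R) →ₗ[R] R :=
  LinearMap.proj 0 + (X 1 : R) • LinearMap.proj 1 + ((X 1 : R) ^ 2) • LinearMap.proj 2

lemma l_apply (v : Fin 3 → R) : l v = v 0 + X 1 * v 1 + X 1 ^ 2 * v 2 := by
  simp [l, smul_eq_mul]

lemma mulVecLin_apply' (v : Fin 6 → R) (i : Fin 3) :
    D.mulVecLin v i = ∑ j, D i j * v j := by
  simp [Matrix.mulVecLin_apply, Matrix.mulVec, dotProduct]

lemma N_le_ker : N ≤ LinearMap.ker ((I.mkQ).comp l) := by
  rintro _ ⟨v, rfl⟩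
  simp only [LinearMap.mem_ker, LinearMap.comp_apply, Submodule.mkQ_apply,
    Submodule.Quotient.mk_eq_zero]
  have : l (D.mulVecLin v) =
      (-(v 1) - v 2 - X 1 * v 3) * (X 1 ^ 3 - 1) +
      (-(X 1 * v 1) - X 1 ^ 2 * v 3 - v 5) * (X 0 - X 1 ^ 2) := by
    simp only [l_apply, mulVecLin_apply', Fin.sum_univ_six]
    simp [D, (show (5:Fin 6) = (4 : Fin 5).succ from rfl), Matrix.cons_val_succ, Matrix.cons_val_four]
    ring
  rw [this]
  exact I.add_mem (I.mul_mem_left _ h1) (I.mul_mem_left _ h2)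

def pibar : ((Fin 3 → R) ⧸ N) →ₗ[R] (R ⧸ I) :=
  Submodule.liftQ N ((I.mkQ).comp l) N_le_ker

lemma mem1 : (X 1 ^ 3 - 1 : R) • (Pi.single 0 1 : Fin 3 → R) ∈ N := by
  refine ⟨![-(X 1), 0, -1, 0, -(X 1 ^ 2), 0], ?_⟩
  funext i
  rw [mulVecLin_apply']
  fin_cases i <;>
    · simp [D, Fin.sum_univ_six, (show (5:Fin 6) = (4 : Fin 5).succ from rfl),
        Matrix.cons_val_succ, Matrix.cons_val_four, Pi.single_apply]
      try ring

lemma mem2 : (X 0 - X 1 ^ 2 : R) • (Pi.single 0 1 : Fin 3 → R) ∈ N := by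
  refine ⟨![1, 0, 0, 0, X 1, -1], ?_⟩
  funext i
  rw [mulVecLin_apply']
  fin_cases i <;>
    · simp [D, Fin.sum_univ_six, (show (5:Fin 6) = (4 : Fin 5).succ from rfl),
        Matrix.cons_val_succ, Matrix.cons_val_four, Pi.single_apply]
      try ring

lemma l_single : l (Pi.single 0 1 : Fin 3 → R) = 1 := by
  simp [l_apply, Pi.single_apply]

def psi : R →ₗ[R] ((Fin 3 → R) ⧸ N) :=
  LinearMap.toSpanSingleton R _ (N.mkQ (Pi.single 0 1))

lemma I_le_ker : (I : Submodule R R) ≤ LinearMap.ker psi := by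
  rw [Ideal.span_le]
  rintro g (rfl | rfl) <;>
    simp only [SetLike.mem_coe, LinearMap.mem_ker, psi, LinearMap.toSpanSingleton_apply,
      Submodule.mkQ_apply]
  all_goals rw [← Submodule.Quotient.mk_smul N, Submodule.Quotient.mk_eq_zero]
  · exact mem1
  · exact mem2

def psibar : (R ⧸ I) →ₗ[R] ((Fin 3 → R) ⧸ N) :=
  Submodule.liftQ I psi I_le_ker

def cokerEquiv : ((Fin 3 → R) ⧸ N) ≃ₗ[R] (R ⧸ I) := by
  refine LinearEquiv.ofLinear pibar psibar ?_ ?_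
  · refine Submodule.linearMap_qext _ (LinearMap.ext fun r => ?_)
    show pibar (psibar (Submodule.Quotient.mk r)) = Submodule.Quotient.mk r
    have h : psibar (Submodule.Quotient.mk r)
        = Submodule.Quotient.mk (r • (Pi.single 0 1 : Fin 3 → R)) := by
      show r • (Submodule.Quotient.mk (Pi.single 0 1 : Fin 3 → R)
          : (Fin 3 → R) ⧸ N) = _
      rw [← Submodule.Quotient.mk_smul N]
    rw [h]
    show Submodule.Quotient.mk (l (r • (Pi.single 0 1 : Fin 3 → R)))
        = Submodule.Quotient.mk r
    rw [map_smul, l_single, smul_eq_mul, mul_one]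
  · refine Submodule.linearMap_qext _ (LinearMap.ext fun v => ?_)
    simp only [LinearMap.comp_apply, Submodule.mkQ_apply, pibar, psibar,
      Submodule.liftQ_apply, psi, LinearMap.toSpanSingleton_apply, LinearMap.id_apply,
      ← Submodule.Quotient.mk_smul N]
    rw [Submodule.Quotient.eq]
    refine ⟨![-(v 2), 0, 0, 0, -(v 1) - X 1 * v 2, 0], ?_⟩
    funext i
    rw [mulVecLin_apply']
    fin_cases i <;>
      · simp [D, l_apply, Fin.sum_univ_six, (show (5:Fin 6) = (4 : Fin 5).succ from rfl),
          Matrix.cons_val_succ, Matrix.cons_val_four, Pi.single_apply]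
        try ring

abbrev A := AddMonoidAlgebra ℂ (ZMod 3)

def f : R →ₐ[ℂ] A :=
  aeval (fun i : Fin 2 =>
    if i = 0 then AddMonoidAlgebra.single (2 : ZMod 3) 1 else AddMonoidAlgebra.single 1 1)

lemma f_X0 : f (X 0) = AddMonoidAlgebra.single (2 : ZMod 3) 1 := by simp [f]
lemma f_X1 : f (X 1) = AddMonoidAlgebra.single (1 : ZMod 3) 1 := by simp [f]

lemma single_pow3 : (AddMonoidAlgebra.single (1 : ZMod 3) (1:ℂ)) ^ 3 = 1 := by
  rw [AddMonoidAlgebra.single_pow]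
  norm_num
  try rfl

lemma f_vanish : ∀ a ∈ I, f a = 0 := by
  intro a ha
  have : I ≤ RingHom.ker (f : R →+* A) := by
    rw [Ideal.span_le]
    rintro g (rfl | rfl) <;>
      simp only [SetLike.mem_coe, RingHom.mem_ker, AlgHom.coe_toRingHom, map_sub, map_pow,
        map_one, f_X0, f_X1, single_pow3, sub_self]
    rw [AddMonoidAlgebra.single_pow]
    norm_num
    try rfl
  exact this ha

def fbar : (R ⧸ I) →ₐ[ℂ] A := Ideal.Quotient.liftₐ I f f_vanish

def ybar : R ⧸ I := Ideal.Quotient.mk I (X 1)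

lemma ybar_cube : ybar ^ 3 = 1 := by
  have : Ideal.Quotient.mk I (X 1 ^ 3 - 1) = 0 := by
    rw [Ideal.Quotient.eq_zero_iff_mem]; exact h1
  have h := (Ideal.Quotient.mk I).map_sub (X 1 ^ 3) 1
  rw [this] at h
  simpa [ybar, sub_eq_zero, map_pow] using h.symm

lemma ybar_pow_mod (n : ℕ) : ybar ^ n = ybar ^ (n % 3) := by
  conv_lhs => rw [← Nat.div_add_mod n 3]
  rw [pow_add, pow_mul, ybar_cube, one_pow, one_mul]

def G : Multiplicative (ZMod 3) →* (R ⧸ I) where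
  toFun z := ybar ^ (Multiplicative.toAdd z).val
  map_one' := by simp [ZMod.val_zero]
  map_mul' a b := by
    show ybar ^ (Multiplicative.toAdd a + Multiplicative.toAdd b).val = _
    rw [ZMod.val_add, ← ybar_pow_mod, pow_add]

def g : A →ₐ[ℂ] (R ⧸ I) := AddMonoidAlgebra.lift ℂ (R ⧸ I) (ZMod 3) G

lemma g_single (a : ZMod 3) : g (AddMonoidAlgebra.single a 1) = ybar ^ a.val := by
  simp [g, AddMonoidAlgebra.lift_single, G]
  try rfl

lemma ybar_sq : ybar ^ 2 = Ideal.Quotient.mk I (X 0) := by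
  rw [ybar, ← map_pow, Ideal.Quotient.eq]
  exact I.neg_mem_iff.mp (by simpa using h2)

def algEquivA : (R ⧸ I) ≃ₐ[ℂ] A := by
  refine AlgEquiv.ofAlgHom fbar g ?_ ?_
  · refine AddMonoidAlgebra.algHom_ext (fun a => ?_) (Subsingleton.elim _ _)
    rw [AlgHom.comp_apply, g_single, map_pow, AlgHom.id_apply]
    show (f (X 1)) ^ a.val = _
    rw [f_X1, AddMonoidAlgebra.single_pow, one_pow]
    congr 1
    rw [nsmul_eq_mul, mul_one, ZMod.natCast_val, ZMod.cast_id]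
  · refine Ideal.Quotient.algHom_ext ℂ (MvPolynomial.algHom_ext fun i => ?_)
    fin_cases i
    · show g (f (X 0)) = Ideal.Quotient.mk I (X 0)
      rw [f_X0, g_single, ← ybar_sq]
      rfl
    · show g (f (X 1)) = Ideal.Quotient.mk I (X 1)
      rw [f_X1, g_single, show (1 : ZMod 3).val = 1 from rfl, pow_one]
      rfl

lemma finrankA : Module.finrank ℂ A = 3 := by
  have : Module.finrank ℂ A = Module.finrank ℂ (ZMod 3 →₀ ℂ) :=
    (AddMonoidAlgebra.coeffLinearEquiv ℂ).finrank_eq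
  rw [this, Module.finrank_finsupp_self]
  simp

end
end HHLaux

open HHLaux in
/-- The cokernel of the rightmost differential `d₁ : R⁶ → R³` of the affine HHL complex
of the torsion example (`R = ℂ[x,y]`) is isomorphic as an `R`-module to
`ℂ[x,y]/(y³ − 1, x − y²)`; in particular the latter is isomorphic as a `ℂ`-algebra to the
group algebra `ℂ[ℤ/3ℤ]` and has dimension `3` over `ℂ`. -/
theorem HHL_torsion_cokernel :
    Nonempty
      (((Fin 3 → MvPolynomial (Fin 2) ℂ) ⧸
          LinearMap.range
            (Matrix.mulVecLin
              (!![0, 1, 1, 0, -(X 1), -(X 0);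
                  -(X 1), -(X 0), 0, 1, 1, 0;
                  1, 0, -(X 1), -(X 0), 0, 1] :
                Matrix (Fin 3) (Fin 6) (MvPolynomial (Fin 2) ℂ))))
        ≃ₗ[MvPolynomial (Fin 2) ℂ]
          (MvPolynomial (Fin 2) ℂ ⧸
            Ideal.span ({X 1 ^ 3 - 1, X 0 - X 1 ^ 2} : Set (MvPolynomial (Fin 2) ℂ)))) ∧
    Nonempty
      ((MvPolynomial (Fin 2) ℂ ⧸
          Ideal.span ({X 1 ^ 3 - 1, X 0 - X 1 ^ 2} : Set (MvPolynomial (Fin 2) ℂ)))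
        ≃ₐ[ℂ] AddMonoidAlgebra ℂ (ZMod 3)) ∧
    Module.finrank ℂ
        (MvPolynomial (Fin 2) ℂ ⧸
          Ideal.span ({X 1 ^ 3 - 1, X 0 - X 1 ^ 2} : Set (MvPolynomial (Fin 2) ℂ))) = 3 := by
  exact ⟨⟨cokerEquiv⟩, ⟨algEquivA⟩, (algEquivA.toLinearEquiv.finrank_eq).trans finrankA⟩
end
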